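/- Let Lx, Ly and m be positive integers with 2m < Lx and 2m < Ly. Let s₁ᵖ(m) be the number of unordered pairs of distinct sites of the Lx × Ly lattice at periodic taxicab distance m, and s₁ⁿ(m) the number of unordered pairs at ordinary (non-periodic) taxicab distance m. Then the remainder r₁(m) = s₁ᵖ(m) − s₁ⁿ(m) satisfies 3·r₁(m) = 3·(Lx + Ly)·m² − (m³ − m), i.e. r₁(m) = (Lx + Ly)m² − (m³ − m)/3. -/

import Mathlib

/-!
Passing to ordered pairs doubles both counts, and the diagonal pairs contribute equally to
both. Each distance is a sum of one-dimensional distances, so the ordered counts are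
convolutions over `u + v = m` of one-dimensional counts: a path of `L` sites has
`c(d) (L - d)` ordered pairs at distance `d`, a cycle of `L` sites has `c(d) L` of them when
`2d < L`, where `c(0) = 1` and `c(d) = 2` otherwise. The difference of the two convolutions
is `∑_{u+v=m} c(u) c(v) (Lx v + Ly u - u v) = 2 (Lx + Ly) m² - 4 ∑_{u+v=m} u v`, and
`6 ∑_{u+v=m} u v = m³ - m`.
-/

/-- The site set of the `Lx × Ly` square lattice. -/
def latticeSites (Lx Ly : ℕ) : Finset (ℕ × ℕ) :=
  Finset.range Lx ×ˢ Finset.range Ly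

/-- The taxicab distance under periodic boundary conditions on an `Lx × Ly` lattice. -/
def periodicTaxicabDist (Lx Ly : ℕ) (a b : ℕ × ℕ) : ℕ :=
  min (Nat.dist a.1 b.1) (Lx - Nat.dist a.1 b.1) +
    min (Nat.dist a.2 b.2) (Ly - Nat.dist a.2 b.2)

/-- The (non-periodic) taxicab distance between two lattice sites. -/
def taxicabDist (a b : ℕ × ℕ) : ℕ :=
  Nat.dist a.1 b.1 + Nat.dist a.2 b.2

open Finset

section PairCounting

variable {α : Type*} [DecidableEq α]

theorem two_mul_card_filter_powersetCard_two (s : Finset α) (r : α → α → Prop)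
    [DecidableRel r] (hr : ∀ a b, r a b → r b a) :
    2 * #{p ∈ s.powersetCard 2 | ∃ a ∈ p, ∃ b ∈ p, a ≠ b ∧ r a b} =
      #{q ∈ s.offDiag | r q.1 q.2} := by
  have hmaps : (({q ∈ s.offDiag | r q.1 q.2} : Finset (α × α)) : Set (α × α)).MapsTo
      (fun q => ({q.1, q.2} : Finset α))
      ({p ∈ s.powersetCard 2 | ∃ a ∈ p, ∃ b ∈ p, a ≠ b ∧ r a b} :
        Finset (Finset α)) := by
    rintro ⟨a, b⟩ hq
    simp only [coe_filter, mem_offDiag, Set.mem_ofPred_eq] at hq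
    simp only [coe_filter, mem_powersetCard, Set.mem_ofPred_eq]
    exact ⟨⟨insert_subset hq.1.1 (singleton_subset_iff.2 hq.1.2.1), card_pair hq.1.2.2⟩,
      a, by simp, b, by simp, hq.1.2.2, hq.2⟩
  rw [card_eq_sum_card_fiberwise hmaps, sum_const_nat, mul_comm]
  intro p hp
  simp only [mem_filter, mem_powersetCard, card_eq_two] at hp
  obtain ⟨⟨hps, a, b, hab, rfl⟩, x, hx, y, hy, hxy, hrxy⟩ := hp
  have hrab : r a b := by
    simp only [mem_insert, mem_singleton] at hx hy
    rcases hx with rfl | rfl <;> rcases hy with rfl | rfl <;> grind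
  have hfiber : {q ∈ s.offDiag | r q.1 q.2 ∧ ({q.1, q.2} : Finset α) = {a, b}} =
      {(a, b), (b, a)} := by
    ext ⟨c, d⟩
    simp only [mem_filter, mem_offDiag, mem_insert, mem_singleton, Prod.mk.injEq]
    constructor
    · rintro ⟨⟨-, -, hcd⟩, -, hcd'⟩
      have hc : c ∈ ({a, b} : Finset α) := hcd' ▸ by simp
      have hd : d ∈ ({a, b} : Finset α) := hcd' ▸ by simp
      simp only [mem_insert, mem_singleton] at hc hd
      grind
    · rintro (⟨rfl, rfl⟩ | ⟨rfl, rfl⟩)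
      · exact ⟨⟨hps (by simp), hps (by simp), hab⟩, hrab, rfl⟩
      · exact ⟨⟨hps (by simp), hps (by simp), hab.symm⟩, hr _ _ hrab, pair_comm _ _⟩
  rw [filter_filter, hfiber, card_pair (by simp [hab])]

theorem card_filter_product_self_eq_add (s : Finset α) (r : α → α → Prop) [DecidableRel r]
    (hr : ∀ a b, r a b → r b a) :
    #{q ∈ s ×ˢ s | r q.1 q.2} =
      #{a ∈ s | r a a} +
        2 * #{p ∈ s.powersetCard 2 | ∃ a ∈ p, ∃ b ∈ p, a ≠ b ∧ r a b} := by
  rw [two_mul_card_filter_powersetCard_two s r hr, ← diag_union_offDiag, filter_union,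
    card_union_of_disjoint (disjoint_filter_filter (disjoint_diag_offDiag s)), diag,
    filter_map, card_map]
  rfl

end PairCounting

theorem card_filter_add_eq_sum_antidiagonal {α β : Type*} (A : Finset α) (B : Finset β)
    (f : α → ℕ) (g : β → ℕ) (m : ℕ) :
    #{q ∈ A ×ˢ B | f q.1 + g q.2 = m} =
      ∑ p ∈ antidiagonal m, #{a ∈ A | f a = p.1} * #{b ∈ B | g b = p.2} := by
  have hmaps : ((({q ∈ A ×ˢ B | f q.1 + g q.2 = m}) : Finset _) : Set (α × β)).MapsTo
      (fun q => (f q.1, g q.2)) (antidiagonal m : Set (ℕ × ℕ)) := by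
    intro q hq
    simpa using (mem_filter.1 hq).2
  rw [card_eq_sum_card_fiberwise hmaps]
  refine sum_congr rfl fun p hp => ?_
  rw [HasAntidiagonal.mem_antidiagonal] at hp
  rw [filter_filter, ← card_product, ← filter_product]
  congr 1
  refine filter_congr fun q _ => ?_
  rw [Prod.ext_iff]
  omega

theorem card_filter_product_product_eq_sum_antidiagonal {α β : Type*}
    (A : Finset α) (B : Finset β) (f : α → α → ℕ) (g : β → β → ℕ) (m : ℕ) :
    #{q ∈ (A ×ˢ B) ×ˢ (A ×ˢ B) | f q.1.1 q.2.1 + g q.1.2 q.2.2 = m} =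
      ∑ p ∈ antidiagonal m,
        #{x ∈ A ×ˢ A | f x.1 x.2 = p.1} * #{y ∈ B ×ˢ B | g y.1 y.2 = p.2} := by
  rw [← card_filter_add_eq_sum_antidiagonal]
  refine card_equiv (Equiv.prodProdProdComm α β α β) fun q => ?_
  simp only [mem_filter, mem_product, Equiv.prodProdProdComm_apply]
  tauto

-- the number of integers of absolute value `d`
def numSigns (d : ℕ) : ℕ := if d = 0 then 1 else 2

def circDist (L x y : ℕ) : ℕ := min (Nat.dist x y) (L - Nat.dist x y)

theorem card_filter_snd_eq_fst_add (L d : ℕ) :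
    #{x ∈ range L ×ˢ range L | x.2 = x.1 + d} = L - d := by
  rw [← card_range (L - d)]
  refine card_nbij' Prod.fst (fun i => (i, i + d)) ?_ ?_ ?_ ?_ <;>
    intro x hx <;> simp_all [Prod.ext_iff] <;> omega

theorem card_filter_fst_eq_snd_add (L d : ℕ) :
    #{x ∈ range L ×ˢ range L | x.1 = x.2 + d} = L - d := by
  rw [← card_filter_snd_eq_fst_add]
  exact card_equiv (Equiv.prodComm ℕ ℕ) fun x => by simp [and_comm]

theorem card_filter_dist_eq (L d : ℕ) :
    #{x ∈ range L ×ˢ range L | Nat.dist x.1 x.2 = d} = numSigns d * (L - d) := by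
  rcases Nat.eq_zero_or_pos d with rfl | hd
  · rw [numSigns, if_pos rfl, one_mul, ← card_filter_snd_eq_fst_add L 0]
    congr 1
    refine filter_congr fun x _ => ?_
    simp only [Nat.dist]
    omega
  · have hsplit : {x ∈ range L ×ˢ range L | Nat.dist x.1 x.2 = d} =
        {x ∈ range L ×ˢ range L | x.2 = x.1 + d} ∪
          {x ∈ range L ×ˢ range L | x.1 = x.2 + d} := by
      rw [← filter_or]
      refine filter_congr fun x _ => ?_
      simp only [Nat.dist]
      omega
    rw [hsplit, card_union_of_disjoint, card_filter_snd_eq_fst_add, card_filter_fst_eq_snd_add,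
      numSigns, if_neg hd.ne', two_mul]
    exact disjoint_filter.2 fun x _ h => by omega

theorem card_filter_circDist_eq (L d : ℕ) (hd : 2 * d < L) :
    #{x ∈ range L ×ˢ range L | circDist L x.1 x.2 = d} = numSigns d * L := by
  have hsplit : {x ∈ range L ×ˢ range L | circDist L x.1 x.2 = d} =
      {x ∈ range L ×ˢ range L | Nat.dist x.1 x.2 = d} ∪
        {x ∈ range L ×ˢ range L | Nat.dist x.1 x.2 = L - d} := by
    rw [← filter_or]
    refine filter_congr fun x hx => ?_
    simp only [mem_product, mem_range] at hx
    simp only [circDist, Nat.dist]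
    omega
  rw [hsplit, card_union_of_disjoint, card_filter_dist_eq, card_filter_dist_eq]
  · simp only [numSigns]
    split_ifs <;> omega
  · exact disjoint_filter.2 fun x _ h => by omega

theorem numSigns_mul_eq_two_mul (d : ℕ) : numSigns d * d = 2 * d := by
  unfold numSigns
  split_ifs with hd <;> simp [hd]

theorem two_mul_sum_antidiagonal_snd (n : ℕ) :
    2 * ∑ p ∈ antidiagonal n, p.2 = n * (n + 1) := by
  induction n with
  | zero => simp
  | succ n ih =>
    rw [Nat.sum_antidiagonal_succ, mul_add, ih]
    ring

theorem sum_antidiagonal_numSigns_fst_mul_snd (n : ℕ) :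
    ∑ p ∈ antidiagonal n, numSigns p.1 * p.2 = n ^ 2 := by
  cases n with
  | zero => simp
  | succ n =>
    simp only [Nat.sum_antidiagonal_succ, numSigns, if_true, Nat.succ_ne_zero, if_false,
      ← mul_sum, two_mul_sum_antidiagonal_snd]
    ring

theorem six_mul_sum_antidiagonal_mul_add (n : ℕ) :
    6 * ∑ p ∈ antidiagonal n, p.1 * p.2 + n = n ^ 3 := by
  induction n with
  | zero => simp
  | succ n ih =>
    have h := two_mul_sum_antidiagonal_snd n
    simp only [Nat.sum_antidiagonal_succ, add_mul, one_mul, sum_add_distrib, zero_mul, zero_add]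
    linear_combination ih + 3 * h

theorem sum_antidiagonal_numSigns_mul_sub (X Y : ℤ) (m : ℕ) :
    3 * (∑ p ∈ antidiagonal m, (numSigns p.1 * X) * (numSigns p.2 * Y) -
        ∑ p ∈ antidiagonal m, (numSigns p.1 * (X - p.1)) * (numSigns p.2 * (Y - p.2))) =
      2 * (3 * (X + Y) * m ^ 2 - (m ^ 3 - m)) := by
  have hterm : ∀ p : ℕ × ℕ, (numSigns p.1 * X) * (numSigns p.2 * Y) -
      (numSigns p.1 * (X - p.1)) * (numSigns p.2 * (Y - p.2)) =
        2 * X * (numSigns p.1 * p.2 : ℕ) + 2 * Y * (numSigns p.2 * p.1 : ℕ) -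
          4 * (p.1 * p.2 : ℕ) := by
    intro p
    have h1 := congrArg (Nat.cast (R := ℤ)) (numSigns_mul_eq_two_mul p.1)
    have h2 := congrArg (Nat.cast (R := ℤ)) (numSigns_mul_eq_two_mul p.2)
    push_cast at h1 h2 ⊢
    linear_combination (Y - p.2) * numSigns p.2 * h1 + (X * numSigns p.1 - 2 * p.1) * h2
  have hswap : ∑ p ∈ antidiagonal m, numSigns p.2 * p.1 = m ^ 2 := by
    rw [← sum_antidiagonal_numSigns_fst_mul_snd m, ← Nat.sum_antidiagonal_swap]
    rfl
  have hcube := congrArg (Nat.cast (R := ℤ)) (six_mul_sum_antidiagonal_mul_add m)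
  rw [← sum_sub_distrib]
  simp only [hterm, sum_sub_distrib, sum_add_distrib, ← mul_sum, ← Nat.cast_sum,
    sum_antidiagonal_numSigns_fst_mul_snd, hswap]
  push_cast at hcube ⊢
  linear_combination -2 * hcube

theorem periodicTaxicabDist_comm (Lx Ly : ℕ) (a b : ℕ × ℕ) :
    periodicTaxicabDist Lx Ly a b = periodicTaxicabDist Lx Ly b a := by
  simp only [periodicTaxicabDist, Nat.dist_comm a.1, Nat.dist_comm a.2]

theorem taxicabDist_comm (a b : ℕ × ℕ) : taxicabDist a b = taxicabDist b a := by
  simp only [taxicabDist, Nat.dist_comm a.1, Nat.dist_comm a.2]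

@[simp]
theorem periodicTaxicabDist_self (Lx Ly : ℕ) (a : ℕ × ℕ) :
    periodicTaxicabDist Lx Ly a a = 0 := by
  simp [periodicTaxicabDist]

@[simp]
theorem taxicabDist_self (a : ℕ × ℕ) : taxicabDist a a = 0 := by
  simp [taxicabDist]

theorem card_filter_periodicTaxicabDist_eq {Lx Ly m : ℕ} (hmx : 2 * m < Lx) (hmy : 2 * m < Ly) :
    (#{q ∈ latticeSites Lx Ly ×ˢ latticeSites Lx Ly |
        periodicTaxicabDist Lx Ly q.1 q.2 = m} : ℤ) =
      ∑ p ∈ antidiagonal m, (numSigns p.1 * Lx : ℤ) * (numSigns p.2 * Ly) := by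
  refine (congrArg Nat.cast (card_filter_product_product_eq_sum_antidiagonal (range Lx) (range Ly)
    (circDist Lx) (circDist Ly) m)).trans ?_
  rw [Nat.cast_sum]
  refine sum_congr rfl fun p hp => ?_
  rw [HasAntidiagonal.mem_antidiagonal] at hp
  rw [card_filter_circDist_eq _ _ (by omega), card_filter_circDist_eq _ _ (by omega)]
  push_cast
  rfl

theorem card_filter_taxicabDist_eq {Lx Ly m : ℕ} (hmx : m ≤ Lx) (hmy : m ≤ Ly) :
    (#{q ∈ latticeSites Lx Ly ×ˢ latticeSites Lx Ly | taxicabDist q.1 q.2 = m} : ℤ) =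
      ∑ p ∈ antidiagonal m,
        (numSigns p.1 * (Lx - p.1 : ℤ)) * (numSigns p.2 * (Ly - p.2)) := by
  refine (congrArg Nat.cast (card_filter_product_product_eq_sum_antidiagonal (range Lx) (range Ly)
    Nat.dist Nat.dist m)).trans ?_
  rw [Nat.cast_sum]
  refine sum_congr rfl fun p hp => ?_
  rw [HasAntidiagonal.mem_antidiagonal] at hp
  rw [card_filter_dist_eq, card_filter_dist_eq]
  push_cast [Nat.cast_sub (show p.1 ≤ Lx by omega), Nat.cast_sub (show p.2 ≤ Ly by omega)]
  rfl

theorem periodic_nonperiodic_taxicab_remainder_general (Lx Ly m : ℕ)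
    (hmx : 2 * m < Lx) (hmy : 2 * m < Ly) :
    3 * (((((latticeSites Lx Ly).powersetCard 2).filter
        (fun p => ∃ a ∈ p, ∃ b ∈ p, a ≠ b ∧ periodicTaxicabDist Lx Ly a b = m)).card : ℤ)
      - ((((latticeSites Lx Ly).powersetCard 2).filter
        (fun p => ∃ a ∈ p, ∃ b ∈ p, a ≠ b ∧ taxicabDist a b = m)).card : ℤ))
      = 3 * (Lx + Ly) * m ^ 2 - (m ^ 3 - m) := by
  have key := sum_antidiagonal_numSigns_mul_sub Lx Ly m
  rw [← card_filter_periodicTaxicabDist_eq hmx hmy,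
    ← card_filter_taxicabDist_eq (by omega) (by omega),
    card_filter_product_self_eq_add _ (fun a b => periodicTaxicabDist Lx Ly a b = m)
      fun a b h => (periodicTaxicabDist_comm Lx Ly b a).trans h,
    card_filter_product_self_eq_add _ (fun a b => taxicabDist a b = m)
      fun a b h => (taxicabDist_comm b a).trans h] at key
  simp only [periodicTaxicabDist_self, taxicabDist_self] at key
  push_cast at key
  linarith

/-- For `0 < m` with `2m < Lx` and `2m < Ly`, the remainder
`r₁(m) = s₁ᵖ(m) − s₁ⁿ(m)` between the periodic and non-periodic counts of unordered
pairs of distinct sites at taxicab distance `m` satisfies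
`3 r₁(m) = 3 (Lx + Ly) m² − (m³ − m)`. -/
theorem periodic_nonperiodic_taxicab_remainder (Lx Ly m : ℕ)
    (hLx : 0 < Lx) (hLy : 0 < Ly) (hm : 0 < m) (hmx : 2 * m < Lx) (hmy : 2 * m < Ly) :
    3 * (((((latticeSites Lx Ly).powersetCard 2).filter
        (fun p => ∃ a ∈ p, ∃ b ∈ p, a ≠ b ∧ periodicTaxicabDist Lx Ly a b = m)).card : ℤ)
      - ((((latticeSites Lx Ly).powersetCard 2).filter
        (fun p => ∃ a ∈ p, ∃ b ∈ p, a ≠ b ∧ taxicabDist a b = m)).card : ℤ))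
      = 3 * (Lx + Ly) * m ^ 2 - (m ^ 3 - m) :=
  periodic_nonperiodic_taxicab_remainder_general Lx Ly m hmx hmy
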